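/- arXiv:2409.19765 — 2 statements merged into one kernel-verified Lean document; each statement's English description precedes it below -/
import Mathlib

section
/- For every C_θ > 0 there exists a constant K > 0, depending only on C_θ, with the following property. Let T ≥ 2 be an integer, g_o ≥ 1 real, A a nonempty finite set, and for each a ∈ A and t ∈ {1,…,T} let w_a^t ∈ [1, g_o] be real; set n_a^t := ⌊w_a^t⌋, V_a^0 := 1, V_a^t := 1 + Σ_{j=1}^{t} n_a^j (w_a^j)², and γ_a^t := C_θ + sqrt(2 ln T + 2 ln V_a^{t−1}). Suppose δ_a^t are reals with 0 ≤ δ_a^t ≤ min{ C_θ, 2γ_a^t / sqrt(V_a^{t−1}) } for all a and t. Then Σ_{t=1}^{T} Σ_{a∈A} δ_a^t · (w_a^t)² ≤ K · g_o² · |A| · sqrt(T) · ln(T·g_o). -/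
/-!
Fix an arc and write `V_t` for its design sums, so that `V_t - V_{t-1} ≥ (w^t)²`. If
`V_t ≤ 2 V_{t-1}`, then `(w^t)² / √V_{t-1} ≤ 3 (√V_t - √V_{t-1})`, so the round's term
`δ (w^t)² ≤ 2γ (w^t)² / √V_{t-1}` is paid for by the growth of `6 Γ √V`, where `Γ` bounds the
radii. Otherwise `V` at least doubles, `log V` grows by `log 2`, and the term, at most
`C_θ g_o²`, is paid for by the growth of `(C_θ g_o² / log 2) log V`. Telescoping this potential
and using `V_T ≤ (T g_o)³` and `Γ = C_θ + 4 log (T g_o)` bounds each arc separately.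
-/

open Finset Real

noncomputable section

def regretPotential (C G Γ y : ℝ) : ℝ := C * G / log 2 * log y + 6 * Γ * √y

lemma mul_le_potential_sub_potential {C G Γ x y u δ : ℝ} (hx : 0 < x) (hu : 0 ≤ u)
    (huy : u ≤ y - x) (huG : u ≤ G) (hδ : 0 ≤ δ) (hδC : δ ≤ C) (hδΓ : δ ≤ 2 * Γ / √x) :
    δ * u ≤ regretPotential C G Γ y - regretPotential C G Γ x := by
  have hxy : x ≤ y := by linarith
  have hsx : 0 < √x := sqrt_pos.2 hx
  have hδx : δ * √x ≤ 2 * Γ := (le_div_iff₀ hsx).1 hδΓ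
  have hlog : 0 ≤ log y - log x := sub_nonneg.2 (log_le_log hx hxy)
  have hsqrt : 0 ≤ √y - √x := sub_nonneg.2 (sqrt_le_sqrt hxy)
  have hCG : 0 ≤ C * G / log 2 :=
    div_nonneg (mul_nonneg (hδ.trans hδC) (hu.trans huG)) (log_nonneg one_le_two)
  have hΓ : 0 ≤ Γ := by nlinarith
  unfold regretPotential
  rcases le_total y (2 * x) with hy | hy
  · have hy2 : √y ≤ 2 * √x := by
      rw [show 2 * √x = √(2 ^ 2 * x) by rw [sqrt_mul' _ hx.le, sqrt_sq two_pos.le]]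
      exact sqrt_le_sqrt (by linarith)
    have hfactor : y - x = (√y - √x) * (√y + √x) := by
      linear_combination sq_sqrt hx.le - sq_sqrt (hx.le.trans hxy)
    have : δ * u ≤ 6 * Γ * (√y - √x) := calc
      δ * u ≤ δ * ((√y - √x) * (3 * √x)) := by
        gcongr
        calc u ≤ y - x := huy
          _ = (√y - √x) * (√y + √x) := hfactor
          _ ≤ (√y - √x) * (3 * √x) := by gcongr; linarith
      _ = 3 * (√y - √x) * (δ * √x) := by ring
      _ ≤ 3 * (√y - √x) * (2 * Γ) := by gcongr
      _ = 6 * Γ * (√y - √x) := by ring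
    nlinarith [mul_nonneg hCG hlog]
  · have hlog2 : log 2 ≤ log y - log x := by
      rw [← log_div (by linarith) hx.ne']
      exact log_le_log two_pos ((le_div_iff₀ hx).2 hy)
    have : δ * u ≤ C * G / log 2 * (log y - log x) := calc
      δ * u ≤ C * G := mul_le_mul hδC huG hu (hδ.trans hδC)
      _ = C * G / log 2 * log 2 := (div_mul_cancel₀ _ (log_pos one_lt_two).ne').symm
      _ ≤ C * G / log 2 * (log y - log x) := by gcongr
    nlinarith [mul_nonneg hΓ hsqrt]

lemma sum_range_mul_le_potential_sub {C G Γ : ℝ} {V u δ : ℕ → ℝ} {T : ℕ}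
    (hV : ∀ i < T, 0 < V i) (hu : ∀ i < T, 0 ≤ u i ∧ u i ≤ G)
    (huV : ∀ i < T, u i ≤ V (i + 1) - V i)
    (hδ : ∀ i < T, 0 ≤ δ i ∧ δ i ≤ C ∧ δ i ≤ 2 * Γ / √(V i)) :
    ∑ i ∈ range T, δ i * u i ≤ regretPotential C G Γ (V T) - regretPotential C G Γ (V 0) := by
  rw [← sum_range_sub fun i ↦ regretPotential C G Γ (V i)]
  refine sum_le_sum fun i hi ↦ ?_
  rw [mem_range] at hi
  exact mul_le_potential_sub_potential (hV i hi) (hu i hi).1 (huV i hi) (hu i hi).2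
    (hδ i hi).1 (hδ i hi).2.1 (hδ i hi).2.2

def designSum (w : ℕ → ℝ) (t : ℕ) : ℝ := 1 + ∑ j ∈ Icc 1 t, (⌊w j⌋₊ : ℝ) * w j ^ 2

section designSum

variable (w : ℕ → ℝ)

@[simp]
lemma designSum_zero : designSum w 0 = 1 := by simp [designSum]

lemma designSum_succ (t : ℕ) :
    designSum w (t + 1) = designSum w t + ⌊w (t + 1)⌋₊ * w (t + 1) ^ 2 := by
  rw [designSum, designSum, sum_Icc_succ_top (Nat.le_add_left 1 t), add_assoc]

lemma designSum_mono : Monotone (designSum w) :=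
  monotone_nat_of_le_succ fun t ↦ by
    rw [designSum_succ]; exact le_add_of_nonneg_right (by positivity)

lemma one_le_designSum (t : ℕ) : 1 ≤ designSum w t := by
  simpa using designSum_mono w (Nat.zero_le t)

variable {w}

lemma sq_le_designSum_succ_sub {t : ℕ} (h : 1 ≤ w (t + 1)) :
    w (t + 1) ^ 2 ≤ designSum w (t + 1) - designSum w t := by
  have : (1 : ℝ) ≤ ⌊w (t + 1)⌋₊ := by exact_mod_cast Nat.le_floor (by exact_mod_cast h)
  rw [designSum_succ, add_sub_cancel_left]
  nlinarith [sq_nonneg (w (t + 1))]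

lemma designSum_le {T : ℕ} {g : ℝ} (hw : ∀ t ∈ Icc 1 T, 0 ≤ w t ∧ w t ≤ g) :
    designSum w T ≤ 1 + T * g ^ 3 := by
  have hterm : ∀ t ∈ Icc 1 T, (⌊w t⌋₊ : ℝ) * w t ^ 2 ≤ g ^ 3 := fun t ht ↦ by
    obtain ⟨h0, hg⟩ := hw t ht
    calc (⌊w t⌋₊ : ℝ) * w t ^ 2 ≤ w t * w t ^ 2 := by gcongr; exact Nat.floor_le h0
      _ = w t ^ 3 := by ring
      _ ≤ g ^ 3 := by gcongr
  have := sum_le_card_nsmul _ _ _ hterm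
  rw [Nat.card_Icc, Nat.add_sub_cancel, nsmul_eq_mul] at this
  rw [designSum]
  linarith

lemma log_designSum_le {T : ℕ} {g : ℝ} (hT : 2 ≤ T) (hg : 1 ≤ g)
    (hw : ∀ t ∈ Icc 1 T, 0 ≤ w t ∧ w t ≤ g) {t : ℕ} (ht : t ≤ T) :
    log (designSum w t) ≤ 3 * log (T * g) := by
  have hT2 : (2 : ℝ) ≤ T := by exact_mod_cast hT
  have hTg3 : 1 ≤ T * g ^ 3 := one_le_mul_of_one_le_of_one_le (by linarith) (one_le_pow₀ hg)
  have : designSum w t ≤ (T * g) ^ 3 := calc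
    designSum w t ≤ 1 + T * g ^ 3 := (designSum_mono w ht).trans (designSum_le hw)
    _ ≤ T ^ 2 * (T * g ^ 3) := by nlinarith [(by nlinarith : (4 : ℝ) ≤ T ^ 2)]
    _ = (T * g) ^ 3 := by ring
  calc log (designSum w t) ≤ log ((T * g) ^ 3) :=
        log_le_log (zero_lt_one.trans_le (one_le_designSum w t)) this
    _ = 3 * log (T * g) := by rw [log_pow]; norm_num

lemma sqrt_designSum_le {T : ℕ} {g : ℝ} (hT : 1 ≤ T) (hg : 1 ≤ g)
    (hw : ∀ t ∈ Icc 1 T, 0 ≤ w t ∧ w t ≤ g) :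
    √(designSum w T) ≤ 2 * g ^ 2 * √T := by
  have hT1 : (1 : ℝ) ≤ T := by exact_mod_cast hT
  have hTg3 : 1 ≤ T * g ^ 3 := one_le_mul_of_one_le_of_one_le hT1 (one_le_pow₀ hg)
  rw [sqrt_le_left (by positivity), mul_pow, mul_pow, sq_sqrt (by linarith)]
  nlinarith [designSum_le hw, pow_le_pow_right₀ hg (by norm_num : 3 ≤ 4)]

end designSum

lemma sum_Icc_one_eq_sum_range {M : Type*} [AddCommMonoid M] (f : ℕ → M) (T : ℕ) :
    ∑ t ∈ Icc 1 T, f t = ∑ i ∈ range T, f (i + 1) := by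
  rw [← Ico_add_one_right_eq_Icc, sum_Ico_eq_sum_range, Nat.add_sub_cancel]
  simp only [add_comm]

lemma potential_sub_potential_one_le {C g L s y : ℝ} (hC : 0 ≤ C) (hL : 1 / 2 ≤ L)
    (hs : 1 ≤ s) (hy : 1 ≤ y) (hlog : log y ≤ 3 * L) (hsqrt : √y ≤ 2 * g ^ 2 * s) :
    regretPotential C (g ^ 2) (C + 4 * L) y - regretPotential C (g ^ 2) (C + 4 * L) 1
      ≤ 48 * (C + 1) * g ^ 2 * s * L := by
  have hlog2 : 1 / 2 ≤ log 2 := by linarith [log_two_gt_d9]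
  calc regretPotential C (g ^ 2) (C + 4 * L) y - regretPotential C (g ^ 2) (C + 4 * L) 1
      = C * g ^ 2 / log 2 * log y + 6 * (C + 4 * L) * (√y - 1) := by
        simp only [regretPotential, log_one, sqrt_one]; ring
    _ ≤ C * g ^ 2 / (1 / 2) * (3 * L) + 6 * (C + 4 * L) * (2 * g ^ 2 * s) := by
        have : 0 ≤ log y := log_nonneg hy
        gcongr
        linarith
    _ ≤ 48 * (C + 1) * g ^ 2 * s * L := by
        have hM : 0 ≤ g ^ 2 * s * L := by positivity
        have h1 : g ^ 2 * L ≤ g ^ 2 * s * L := by nlinarith [sq_nonneg g]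
        have h2 : g ^ 2 * s ≤ 2 * (g ^ 2 * s * L) := by nlinarith [sq_nonneg g]
        nlinarith [mul_le_mul_of_nonneg_left h1 hC, mul_le_mul_of_nonneg_left h2 hC,
          mul_nonneg hC hM]

theorem sum_mul_sq_le_of_le_confidence {Cθ g : ℝ} {T : ℕ} {w γ δ : ℕ → ℝ} (hCθ : 0 ≤ Cθ)
    (hT : 2 ≤ T) (hg : 1 ≤ g) (hw : ∀ t ∈ Icc 1 T, 1 ≤ w t ∧ w t ≤ g)
    (hγ : ∀ t, γ t = Cθ + √(2 * log T + 2 * log (designSum w (t - 1))))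
    (hδ : ∀ t ∈ Icc 1 T, 0 ≤ δ t ∧ δ t ≤ min Cθ (2 * γ t / √(designSum w (t - 1)))) :
    ∑ t ∈ Icc 1 T, δ t * w t ^ 2 ≤ 48 * (Cθ + 1) * g ^ 2 * √T * log (T * g) := by
  set L := log (T * g)
  have hw₀ : ∀ t ∈ Icc 1 T, 0 ≤ w t ∧ w t ≤ g := fun t ht ↦
    ⟨zero_le_one.trans (hw t ht).1, (hw t ht).2⟩
  have hT2 : (2 : ℝ) ≤ T := by exact_mod_cast hT
  have hL : 1 / 2 ≤ L :=
    (by linarith [log_two_gt_d9] : 1 / 2 ≤ log 2).trans (log_le_log two_pos (by nlinarith))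
  have hsqrtT : 1 ≤ √(T : ℝ) := one_le_sqrt.2 (by linarith)
  have hγL : ∀ t ∈ Icc 1 T, γ t ≤ Cθ + 4 * L := fun t ht ↦ by
    have hlogT : log T ≤ L := log_le_log (by linarith) (le_mul_of_one_le_right (by linarith) hg)
    have := log_designSum_le hT hg hw₀ ((Nat.sub_le t 1).trans (mem_Icc.1 ht).2)
    rw [hγ, add_le_add_iff_left, sqrt_le_left (by linarith)]
    nlinarith
  have hmem : ∀ i < T, i + 1 ∈ Icc 1 T := fun i hi ↦ mem_Icc.2 ⟨by omega, hi⟩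
  rw [sum_Icc_one_eq_sum_range]
  calc ∑ i ∈ range T, δ (i + 1) * w (i + 1) ^ 2
      ≤ regretPotential Cθ (g ^ 2) (Cθ + 4 * L) (designSum w T)
          - regretPotential Cθ (g ^ 2) (Cθ + 4 * L) (designSum w 0) := by
        refine sum_range_mul_le_potential_sub
          (fun i _ ↦ zero_lt_one.trans_le (one_le_designSum w i))
          (fun i hi ↦ ⟨sq_nonneg _, pow_le_pow_left₀ (hw₀ _ (hmem i hi)).1 (hw₀ _ (hmem i hi)).2 2⟩)
          (fun i hi ↦ sq_le_designSum_succ_sub (hw _ (hmem i hi)).1) (fun i hi ↦ ?_)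
        obtain ⟨h0, hmin⟩ := hδ _ (hmem i hi)
        rw [Nat.add_sub_cancel] at hmin
        refine ⟨h0, hmin.trans (min_le_left _ _), hmin.trans ((min_le_right _ _).trans ?_)⟩
        gcongr
        exact hγL _ (hmem i hi)
    _ ≤ 48 * (Cθ + 1) * g ^ 2 * √T * L := by
        rw [designSum_zero]
        exact potential_sub_potential_one_le hCθ hL hsqrtT (one_le_designSum w T)
          (log_designSum_le hT hg hw₀ le_rfl) (sqrt_designSum_le (by omega) hg hw₀)

end

/-- (Lemma 10 of the paper, the bound on the regret component `R₁`, in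
deterministic form.) For every `C_θ > 0` there is `K > 0` depending only on `C_θ` such that,
with flows `w_a^t ∈ [1, g_o]`, design sums `V_a^t = 1 + Σ_{j≤t} ⌊w_a^j⌋ (w_a^j)²`, radii
`γ_a^t = C_θ + √(2 ln T + 2 ln V_a^{t−1})`, and any reals
`0 ≤ δ_a^t ≤ min{C_θ, 2γ_a^t/√(V_a^{t−1})}`, one has
`Σ_{t=1}^T Σ_a δ_a^t (w_a^t)² ≤ K g_o² |A| √T ln(T g_o)`. -/
theorem stmt_12 (Cθ : ℝ) (hCθ : 0 < Cθ) :
    ∃ K : ℝ, 0 < K ∧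
      ∀ (T : ℕ), 2 ≤ T → ∀ (go : ℝ), 1 ≤ go → ∀ (n : ℕ), 1 ≤ n →
      ∀ (w : ℕ → Fin n → ℝ),
        (∀ t ∈ Finset.Icc 1 T, ∀ a, 1 ≤ w t a ∧ w t a ≤ go) →
      ∀ (V : ℕ → Fin n → ℝ),
        (∀ t a, V t a = 1 + ∑ j ∈ Finset.Icc 1 t, (⌊w j a⌋₊ : ℝ) * (w j a) ^ 2) →
      ∀ (γ : ℕ → Fin n → ℝ),
        (∀ t a, γ t a = Cθ + Real.sqrt (2 * Real.log T + 2 * Real.log (V (t - 1) a))) →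
      ∀ (δ : ℕ → Fin n → ℝ),
        (∀ t ∈ Finset.Icc 1 T, ∀ a,
          0 ≤ δ t a ∧ δ t a ≤ min Cθ (2 * γ t a / Real.sqrt (V (t - 1) a))) →
      ∑ t ∈ Finset.Icc 1 T, ∑ a : Fin n, δ t a * (w t a) ^ 2
        ≤ K * go ^ 2 * (n : ℝ) * Real.sqrt T * Real.log ((T : ℝ) * go) := by
  refine ⟨48 * (Cθ + 1), by positivity, ?_⟩
  intro T hT go hgo n _ w hw V hV γ hγ δ hδ
  obtain rfl : V = fun t a ↦ designSum (w · a) t := funext₂ hV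
  rw [sum_comm]
  calc ∑ a : Fin n, ∑ t ∈ Icc 1 T, δ t a * w t a ^ 2
      ≤ ∑ _a : Fin n, 48 * (Cθ + 1) * go ^ 2 * √T * Real.log (T * go) :=
        sum_le_sum fun a _ ↦ sum_mul_sq_le_of_le_confidence hCθ.le hT hgo
          (fun t ht ↦ hw t ht a) (fun t ↦ hγ t a) (fun t ht ↦ hδ t ht a)
    _ = _ := by simp only [sum_const, card_univ, Fintype.card_fin, nsmul_eq_mul]; ring
end

section
/- Let A be a finite arc set, N a nonempty finite node set with m := |N|, and tail : A → N a map assigning each arc its tail node, such that every node has at least one arc with that tail. Let g_o ≥ 1 and let w : A → ℝ satisfy 1 ≤ w_a for every a ∈ A and Σ_{a: tail(a)=i} w_a ≤ g_o for every i ∈ N. For a ∈ A write r_a := w_a / Σ_{a': tail(a')=tail(a)} w_{a'}. Then: (i) Σ_{a∈A} |ln r_a| ≤ g_o · m · ln(|A| / m), and (ii) Σ_{a∈A} (ln r_a)² ≤ (ln g_o)² · |A|. -/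
/-!
Write `S_i` for the flow out of node `i`, so `r_a = w_a / S_i` for the arcs `a` leaving `i`.
Since `w_a ≥ 1`, `|ln r_a| ≤ w_a ln (S_i / w_a)`, and by Jensen's inequality for `ln` this entropy
of node `i` sums to at most `S_i ln(outdeg i) ≤ g_o ln(outdeg i)`; AM–GM over the `m` nodes bounds
`Σ_i ln(outdeg i)` by `m ln(|A| / m)`. For (ii), `1 ≤ w_a ≤ S_i ≤ g_o` gives `|ln r_a| ≤ ln g_o`.
-/

open Finset

namespace Real

variable {ι : Type*} {s : Finset ι}

theorem sum_mul_log_le_mul_log_sum_mul_div {w z : ι → ℝ} (hw : ∀ i ∈ s, 0 ≤ w i)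
    (hW : 0 < ∑ i ∈ s, w i) (hz : ∀ i ∈ s, 0 < z i) :
    ∑ i ∈ s, w i * log (z i) ≤ (∑ i ∈ s, w i) * log ((∑ i ∈ s, w i * z i) / ∑ i ∈ s, w i) := by
  have h := strictConcaveOn_log_Ioi.concaveOn.le_map_centerMass hw hW hz
  simp only [centerMass, smul_eq_mul, Function.comp_apply] at h
  rw [← inv_mul_le_iff₀ hW, inv_mul_eq_div]
  simpa only [inv_mul_eq_div] using h

theorem sum_mul_log_sum_div_le_mul_log_card {w : ι → ℝ} (hw : ∀ i ∈ s, 0 < w i) :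
    ∑ i ∈ s, w i * log ((∑ j ∈ s, w j) / w i) ≤ (∑ i ∈ s, w i) * log #s := by
  obtain rfl | hs := s.eq_empty_or_nonempty
  · simp
  have hW : 0 < ∑ i ∈ s, w i := sum_pos hw hs
  have hmean : (∑ i ∈ s, w i * ((∑ j ∈ s, w j) / w i)) / ∑ i ∈ s, w i = #s := by
    rw [sum_congr rfl fun i hi => mul_div_cancel₀ _ (hw i hi).ne', sum_const, nsmul_eq_mul,
      mul_div_cancel_right₀ _ hW.ne']
  simpa only [hmean] using sum_mul_log_le_mul_log_sum_mul_div (fun i hi => (hw i hi).le) hW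
    fun i hi => div_pos hW (hw i hi)

theorem sum_log_le_card_mul_log_sum_div_card {c : ι → ℝ} (hs : s.Nonempty)
    (hc : ∀ i ∈ s, 0 < c i) : ∑ i ∈ s, log (c i) ≤ #s * log ((∑ i ∈ s, c i) / #s) := by
  have hcard : (0 : ℝ) < ∑ _i ∈ s, (1 : ℝ) := by simpa using hs.card_pos
  simpa using sum_mul_log_le_mul_log_sum_mul_div (fun _ _ => zero_le_one) hcard hc

theorem abs_log_div_eq_log_div {x y : ℝ} (hx : 0 < x) (hxy : x ≤ y) :
    |log (x / y)| = log (y / x) := by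
  have hy : 0 < y := hx.trans_le hxy
  rw [abs_of_nonpos (log_nonpos (div_pos hx hy).le ((div_le_one hy).2 hxy)), ← log_inv, inv_div]

end Real

open Real

section Flow

variable {A N : Type*} [Fintype A] [DecidableEq N]

def outFlow (tail : A → N) (w : A → ℝ) (i : N) : ℝ :=
  ∑ a ∈ univ.filter fun a' => tail a' = i, w a

variable {tail : A → N} {w : A → ℝ}

theorem le_outFlow (hw : ∀ a, 0 ≤ w a) (a : A) : w a ≤ outFlow tail w (tail a) :=
  single_le_sum (fun b _ => hw b) (by simp)

theorem outFlow_pos_of_one_le (hw : ∀ a, 1 ≤ w a) (a : A) : 0 < outFlow tail w (tail a) :=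
  zero_lt_one.trans_le ((hw a).trans (le_outFlow (fun b => zero_le_one.trans (hw b)) a))

theorem sum_abs_log_div_outFlow_le [Fintype N] (hw : ∀ a, 1 ≤ w a) :
    ∑ a, |log (w a / outFlow tail w (tail a))|
      ≤ ∑ i, outFlow tail w i * log #(univ.filter fun a => tail a = i) := by
  have hw0 : ∀ a, 0 < w a := fun a => zero_lt_one.trans_le (hw a)
  calc ∑ a, |log (w a / outFlow tail w (tail a))|
      ≤ ∑ a, w a * log (outFlow tail w (tail a) / w a) := by
        refine sum_le_sum fun a _ => ?_
        rw [abs_log_div_eq_log_div (hw0 a) (le_outFlow (fun b => (hw0 b).le) a)]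
        refine le_mul_of_one_le_left (log_nonneg ?_) (hw a)
        exact (one_le_div (hw0 a)).2 (le_outFlow (fun b => (hw0 b).le) a)
    _ = ∑ i, ∑ a ∈ univ.filter fun a => tail a = i, w a * log (outFlow tail w i / w a) := by
        rw [← sum_fiberwise univ tail]
        refine sum_congr rfl fun i _ => sum_congr rfl fun a ha => ?_
        rw [(mem_filter.1 ha).2]
    _ ≤ ∑ i, outFlow tail w i * log #(univ.filter fun a => tail a = i) :=
        sum_le_sum fun i _ => sum_mul_log_sum_div_le_mul_log_card fun a _ => hw0 a

theorem abs_log_div_outFlow_le_log_outFlow (hw : ∀ a, 1 ≤ w a) (a : A) :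
    |log (w a / outFlow tail w (tail a))| ≤ log (outFlow tail w (tail a)) := by
  have hS : 0 < outFlow tail w (tail a) := outFlow_pos_of_one_le hw a
  rw [abs_log_div_eq_log_div (zero_lt_one.trans_le (hw a))
    (le_outFlow (fun b => zero_le_one.trans (hw b)) a)]
  exact log_le_log (div_pos hS (zero_lt_one.trans_le (hw a))) (div_le_self hS.le (hw a))

theorem sum_log_card_fiber_le [Fintype N] [Nonempty N] (htail : Function.Surjective tail) :
    ∑ i, log #(univ.filter fun a => tail a = i)
      ≤ Fintype.card N * log (Fintype.card A / Fintype.card N) := by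
  have hcard : ∑ i, (#(univ.filter fun a => tail a = i) : ℝ) = Fintype.card A := by
    exact_mod_cast (card_eq_sum_card_fiberwise fun a _ => mem_univ (tail a)).symm
  have hfiber : ∀ i, (0 : ℝ) < #(univ.filter fun a => tail a = i) := fun i => by
    obtain ⟨a, rfl⟩ := htail i
    exact_mod_cast card_pos.2 ⟨a, by simp⟩
  simpa only [hcard, card_univ] using
    sum_log_le_card_mul_log_sum_div_card univ_nonempty fun i _ => hfiber i

end Flow

theorem stmt_13_general {A N : Type*} [Fintype A] [Fintype N] [DecidableEq N] [Nonempty N]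
    (tail : A → N) (htail : ∀ i : N, ∃ a : A, tail a = i)
    (go : ℝ)
    (w : A → ℝ) (hw : ∀ a, 1 ≤ w a)
    (hflow : ∀ i : N, ∑ a ∈ univ.filter fun a' => tail a' = i, w a ≤ go)
    (r : A → ℝ)
    (hr : ∀ a, r a = w a / ∑ a' ∈ univ.filter fun a' => tail a' = tail a, w a') :
    (∑ a : A, |Real.log (r a)|
        ≤ go * (Fintype.card N : ℝ)
            * Real.log ((Fintype.card A : ℝ) / (Fintype.card N : ℝ)))
    ∧ (∑ a : A, (Real.log (r a)) ^ 2 ≤ (Real.log go) ^ 2 * (Fintype.card A : ℝ)) := by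
  have hflow' : ∀ i, outFlow tail w i ≤ go := hflow
  have hr' : ∀ a, r a = w a / outFlow tail w (tail a) := hr
  simp only [hr']
  have hgo : 0 ≤ go := by
    obtain ⟨a, -⟩ := htail (Classical.arbitrary N)
    exact (outFlow_pos_of_one_le hw a).le.trans (hflow' _)
  constructor
  · calc ∑ a, |log (w a / outFlow tail w (tail a))|
        ≤ ∑ i, outFlow tail w i * log #(univ.filter fun a => tail a = i) :=
          sum_abs_log_div_outFlow_le hw
      _ ≤ go * ∑ i, log #(univ.filter fun a => tail a = i) := by
          rw [mul_sum]
          exact sum_le_sum fun i _ => mul_le_mul_of_nonneg_right (hflow' i) (log_natCast_nonneg _)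
      _ ≤ go * (Fintype.card N * log (Fintype.card A / Fintype.card N)) :=
          mul_le_mul_of_nonneg_left (sum_log_card_fiber_le htail) hgo
      _ = _ := (mul_assoc _ _ _).symm
  · calc ∑ a, log (w a / outFlow tail w (tail a)) ^ 2 ≤ ∑ _a : A, log go ^ 2 := by
          refine sum_le_sum fun a _ => sq_le_sq.2 ?_
          calc |log (w a / outFlow tail w (tail a))|
              ≤ log (outFlow tail w (tail a)) := abs_log_div_outFlow_le_log_outFlow hw a
            _ ≤ log go := log_le_log (outFlow_pos_of_one_le hw a) (hflow' _)
            _ ≤ |log go| := le_abs_self _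
      _ = log go ^ 2 * Fintype.card A := by rw [sum_const, card_univ, nsmul_eq_mul, mul_comm]

/-- Bounds on the gradient of the entropy term (from the proof of
Lemma 13 of the paper). With `r_a = w_a / Σ_{a' : tail a' = tail a} w_{a'}`, `w_a ≥ 1`
and node flows at most `g_o`:
(i) `Σ_a |ln r_a| ≤ g_o · m · ln(|A|/m)` and (ii) `Σ_a (ln r_a)² ≤ (ln g_o)² · |A|`. -/
theorem stmt_13 {A N : Type*} [Fintype A] [Fintype N] [DecidableEq N] [Nonempty N]
    (tail : A → N) (htail : ∀ i : N, ∃ a : A, tail a = i)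
    (go : ℝ) (hgo : 1 ≤ go)
    (w : A → ℝ) (hw : ∀ a, 1 ≤ w a)
    (hflow : ∀ i : N, ∑ a ∈ univ.filter fun a' => tail a' = i, w a ≤ go)
    (r : A → ℝ)
    (hr : ∀ a, r a = w a / ∑ a' ∈ univ.filter fun a' => tail a' = tail a, w a') :
    (∑ a : A, |Real.log (r a)|
        ≤ go * (Fintype.card N : ℝ)
            * Real.log ((Fintype.card A : ℝ) / (Fintype.card N : ℝ)))
    ∧ (∑ a : A, (Real.log (r a)) ^ 2 ≤ (Real.log go) ^ 2 * (Fintype.card A : ℝ)) :=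
  stmt_13_general tail htail go w hw hflow r hr
end
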